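/- arXiv:2204.00850 — 14 statements merged into one kernel-verified Lean document; each statement's English description precedes it below -/
import Mathlib

section
/- Unbiasedness of the longitudinal frequency estimator (Theorem 'est_long'): let p1, q1, p2, q2 ∈ [0,1] with p1 ≠ q1 and p2 ≠ q2, let n be a positive integer, and suppose that among the n users exactly f·n hold the value v (where 0 ≤ f ≤ 1 and f·n is an integer) and each user independently reports v with probability p_s = p1·p2 + (1−p1)·q2 if it holds v and with probability q_s = q1·p2 + (1−q1)·q2 otherwise. Then the estimator f̂ = (N − n·q1·(p2−q2) − n·q2)/(n·(p1−q1)·(p2−q2)), where N is the number of users whose report equals v, satisfies E[f̂] = f. -/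
/-! By linearity of expectation, `E[N] = f n p_s + (1 - f) n q_s = f n (p_s - q_s) + n q_s`. Since
`p_s - q_s = (p1 - q1)(p2 - q2)` and `q_s = q1 (p2 - q2) + q2`, the affine map defining `f̂`
sends `E[N]` back to `f`. -/

open MeasureTheory ProbabilityTheory

section ExpectedCount

variable {Ω ι : Type*} [MeasurableSpace Ω] {μ : Measure Ω}

lemma measureReal_eq_of_eq_ofReal {s : Set Ω} {x : ℝ} (hx : 0 ≤ x)
    (h : μ s = ENNReal.ofReal x) : μ.real s = x := by
  rw [measureReal_def, h, ENNReal.toReal_ofReal hx]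

omit [MeasurableSpace Ω] in
lemma boole_eq_indicator_one (X : Ω → Bool) :
    (fun ω => if X ω then (1 : ℝ) else 0) = {ω | X ω = true}.indicator 1 := by
  ext ω
  by_cases hω : X ω <;> simp [hω]

lemma integral_boole {X : Ω → Bool} (hX : Measurable X) :
    ∫ ω, (if X ω then (1 : ℝ) else 0) ∂μ = μ.real {ω | X ω = true} := by
  rw [boole_eq_indicator_one]
  exact integral_indicator_one (hX (measurableSet_singleton true))

lemma integrable_boole [IsFiniteMeasure μ] {X : Ω → Bool} (hX : Measurable X) :
    Integrable (fun ω => if X ω then (1 : ℝ) else 0) μ := by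
  rw [boole_eq_indicator_one]
  exact (integrable_const 1).indicator (hX (measurableSet_singleton true))

lemma integral_sub_const [IsProbabilityMeasure μ] {Y : Ω → ℝ} (hY : Integrable Y μ) (c : ℝ) :
    ∫ ω, (Y ω - c) ∂μ = ∫ ω, Y ω ∂μ - c := by
  rw [integral_sub hY (integrable_const c), integral_const, probReal_univ, one_smul]

variable [Fintype ι] [IsFiniteMeasure μ] {X : ι → Ω → Bool}

lemma integrable_count (hX : ∀ i, Measurable (X i)) :
    Integrable (fun ω => ∑ i, if X i ω then (1 : ℝ) else 0) μ :=
  integrable_finsetSum _ fun i _ => integrable_boole (hX i)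

lemma integral_count_of_measureReal_eq (hX : ∀ i, Measurable (X i)) (g : ι → Bool) (a b : ℝ)
    (hprob : ∀ i, μ.real {ω | X i ω = true} = if g i then a else b) :
    ∫ ω, (∑ i, if X i ω then (1 : ℝ) else 0) ∂μ
      = (∑ i, if g i then (1 : ℝ) else 0) * (a - b) + Fintype.card ι * b := by
  rw [integral_finsetSum _ fun i _ => integrable_boole (hX i)]
  simp only [integral_boole (hX _), hprob]
  rw [Finset.sum_mul, ← Finset.card_univ, ← nsmul_eq_mul, ← Finset.sum_const,
    ← Finset.sum_add_distrib]
  exact Finset.sum_congr rfl fun i _ => by cases g i <;> simp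

end ExpectedCount

lemma convex_combination_nonneg {t a b : ℝ} (ht : 0 ≤ t ∧ t ≤ 1) (ha : 0 ≤ a) (hb : 0 ≤ b) :
    0 ≤ t * a + (1 - t) * b := by
  nlinarith [ht.1, ht.2]

theorem est_long_general
    {Ω : Type*} [MeasureSpace Ω] [IsProbabilityMeasure (ℙ : Measure Ω)]
    (p1 q1 p2 q2 : ℝ)
    (hp1 : 0 ≤ p1 ∧ p1 ≤ 1) (hq1 : 0 ≤ q1 ∧ q1 ≤ 1)
    (hp2 : 0 ≤ p2 ∧ p2 ≤ 1) (hq2 : 0 ≤ q2 ∧ q2 ≤ 1)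
    (h1 : p1 ≠ q1) (h2 : p2 ≠ q2)
    (n : ℕ) (hn : 0 < n)
    (f : ℝ)
    (holds : Fin n → Bool)
    (hcount : (∑ i, if holds i then (1 : ℝ) else 0) = f * n)
    (report : Fin n → Ω → Bool)
    (hmeas : ∀ i, Measurable (report i))
    (hps : ∀ i, holds i = true →
      ℙ {ω | report i ω = true} = ENNReal.ofReal (p1 * p2 + (1 - p1) * q2))
    (hqs : ∀ i, holds i = false →
      ℙ {ω | report i ω = true} = ENNReal.ofReal (q1 * p2 + (1 - q1) * q2)) :
    ∫ ω, ((∑ i, if report i ω then (1 : ℝ) else 0)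
        - (n : ℝ) * q1 * (p2 - q2) - (n : ℝ) * q2)
        / ((n : ℝ) * (p1 - q1) * (p2 - q2)) ∂ℙ = f := by
  have hprob : ∀ i, (ℙ : Measure Ω).real {ω | report i ω = true}
      = if holds i then p1 * p2 + (1 - p1) * q2 else q1 * p2 + (1 - q1) * q2 := by
    intro i
    cases hi : holds i
    · exact measureReal_eq_of_eq_ofReal (convex_combination_nonneg hq1 hp2.1 hq2.1) (hqs i hi)
    · exact measureReal_eq_of_eq_ofReal (convex_combination_nonneg hp1 hp2.1 hq2.1) (hps i hi)
  have hmean := integral_count_of_measureReal_eq hmeas holds _ _ hprob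
  rw [hcount, Fintype.card_fin] at hmean
  have hN := integrable_count (μ := ℙ) hmeas
  rw [integral_div, integral_sub_const (by fun_prop), integral_sub_const hN, hmean]
  have hn0 : (n : ℝ) ≠ 0 := Nat.cast_ne_zero.mpr hn.ne'
  have hd1 : p1 - q1 ≠ 0 := sub_ne_zero.mpr h1
  have hd2 : p2 - q2 ≠ 0 := sub_ne_zero.mpr h2
  field_simp
  ring

/-- Unbiasedness of the longitudinal frequency estimator (Theorem `est_long`). -/
theorem est_long
    {Ω : Type*} [MeasureSpace Ω] [IsProbabilityMeasure (ℙ : Measure Ω)]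
    (p1 q1 p2 q2 : ℝ)
    (hp1 : 0 ≤ p1 ∧ p1 ≤ 1) (hq1 : 0 ≤ q1 ∧ q1 ≤ 1)
    (hp2 : 0 ≤ p2 ∧ p2 ≤ 1) (hq2 : 0 ≤ q2 ∧ q2 ≤ 1)
    (h1 : p1 ≠ q1) (h2 : p2 ≠ q2)
    (n : ℕ) (hn : 0 < n)
    (f : ℝ) (hf0 : 0 ≤ f) (hf1 : f ≤ 1)
    (holds : Fin n → Bool)
    (hcount : (∑ i, if holds i then (1 : ℝ) else 0) = f * n)
    (report : Fin n → Ω → Bool)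
    (hmeas : ∀ i, Measurable (report i))
    (hindep : iIndepFun report ℙ)
    (hps : ∀ i, holds i = true →
      ℙ {ω | report i ω = true} = ENNReal.ofReal (p1 * p2 + (1 - p1) * q2))
    (hqs : ∀ i, holds i = false →
      ℙ {ω | report i ω = true} = ENNReal.ofReal (q1 * p2 + (1 - q1) * q2)) :
    ∫ ω, ((∑ i, if report i ω then (1 : ℝ) else 0)
        - (n : ℝ) * q1 * (p2 - q2) - (n : ℝ) * q2)
        / ((n : ℝ) * (p1 - q1) * (p2 - q2)) ∂ℙ = f :=
  est_long_general p1 q1 p2 q2 hp1 hq1 hp2 hq2 h1 h2 n hn f holds hcount report hmeas hps hqs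
end

section
/- Variance of the RS+FD[GRR] estimator (Theorem 'variance_grr'): let d ≥ 1 and c ≥ 2 be integers, p, q ∈ [0,1] with p ≠ q and q = (1−p)/(c−1), let n be a positive integer, let 0 ≤ f ≤ 1, and set γ = (1/d)·(q + f·(p−q) + (d−1)/c) (the marginal probability that a user reports v when each user independently holds v with probability f under the RS+FD[GRR] mechanism). If N is the sum of n i.i.d. Bernoulli(γ) indicator random variables, then the estimator f̂ = (N·d·c − n·(d−1+q·c))/(n·c·(p−q)) has variance Var(f̂) = d²·γ·(1−γ)/(n·(p−q)²). -/
/-!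
Each indicator `if X i then 1 else 0` takes only the values 0 and 1, so its variance is
`γ * (1 - γ)`; by independence the count `N` has variance `n * γ * (1 - γ)`. The estimator is
`N * (d * c) / (n * c * (p - q))` minus a constant, so its variance is
`(d / (n * (p - q))) ^ 2 * n * γ * (1 - γ)`.
-/

open MeasureTheory ProbabilityTheory

namespace ProbabilityTheory

variable {Ω : Type*} [MeasurableSpace Ω] {μ : Measure Ω} [IsProbabilityMeasure μ]

lemma variance_mul_sub_div_const {S : Ω → ℝ} (hS : AEStronglyMeasurable S μ) (a b D : ℝ) :
    Var[fun ω ↦ (S ω * a - b) / D; μ] = (a / D) ^ 2 * Var[S; μ] := by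
  have h : (fun ω ↦ (S ω * a - b) / D) = fun ω ↦ a / D * S ω - b / D := by
    ext ω; ring
  rw [h, variance_sub_const (hS.const_mul _), variance_const_mul]

lemma measurable_ite_bool {X : Ω → Bool} (hX : Measurable X) :
    Measurable fun ω ↦ if X ω then (1 : ℝ) else 0 :=
  (Measurable.of_discrete (f := fun b : Bool ↦ if b then (1 : ℝ) else 0)).comp hX

lemma variance_ite_bool {X : Ω → Bool} (hX : Measurable X) :
    Var[fun ω ↦ if X ω then (1 : ℝ) else 0; μ]
      = μ.real {ω | X ω = true} * (1 - μ.real {ω | X ω = true}) := by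
  have hset : MeasurableSet {ω | X ω = true} := hX (measurableSet_singleton true)
  rw [variance_of_ae_eq_zero_or_one (measurable_ite_bool hX).aemeasurable
      (.of_forall fun ω ↦ by cases X ω <;> simp)]
  have h0 : {ω | (if X ω then (1 : ℝ) else 0) = 0} = {ω | X ω = true}ᶜ := by
    ext ω; cases X ω <;> simp
  have h1 : {ω | (if X ω then (1 : ℝ) else 0) = 1} = {ω | X ω = true} := by
    ext ω; cases X ω <;> simp
  rw [h0, h1, probReal_compl_eq_one_sub hset, mul_comm]

lemma variance_sum_ite_of_iIndepFun {ι : Type*} [Fintype ι] {X : ι → Ω → Bool}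
    (hX : ∀ i, Measurable (X i)) (hindep : iIndepFun X μ) {r : ℝ}
    (hr : ∀ i, μ.real {ω | X i ω = true} = r) :
    Var[fun ω ↦ ∑ i, if X i ω then (1 : ℝ) else 0; μ] = Fintype.card ι * (r * (1 - r)) := by
  set Y : ι → Ω → ℝ := fun i ω ↦ if X i ω then 1 else 0
  have hYmem : ∀ i, MemLp (Y i) 2 μ := fun i ↦
    memLp_of_bounded (a := 0) (b := 1) (.of_forall fun ω ↦ by by_cases h : X i ω <;> simp [h])
      (measurable_ite_bool (hX i)).aestronglyMeasurable 2
  have hYindep : iIndepFun Y μ :=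
    hindep.comp (fun _ b ↦ if b then (1 : ℝ) else 0) fun _ ↦ Measurable.of_discrete
  calc Var[fun ω ↦ ∑ i, Y i ω; μ] = ∑ i, Var[Y i; μ] := by
        simpa only [Finset.sum_fn] using IndepFun.variance_sum (s := Finset.univ)
          (fun i _ ↦ hYmem i) fun i _ j _ hij ↦ hYindep.indepFun hij
    _ = Fintype.card ι * (r * (1 - r)) := by
        simp [Y, variance_ite_bool (hX _), hr]

end ProbabilityTheory

lemma rsfd_grr_report_prob_nonneg {d c : ℕ} (hd : 1 ≤ d) {p q f : ℝ} (hp : 0 ≤ p) (hq : 0 ≤ q)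
    (hf0 : 0 ≤ f) (hf1 : f ≤ 1) :
    0 ≤ 1 / (d : ℝ) * (q + f * (p - q) + ((d : ℝ) - 1) / c) := by
  have hmix : 0 ≤ q + f * (p - q) := by
    have := add_nonneg (mul_nonneg (sub_nonneg.2 hf1) hq) (mul_nonneg hf0 hp)
    linarith
  have hd' : (1 : ℝ) ≤ d := by exact_mod_cast hd
  have hfake : 0 ≤ ((d : ℝ) - 1) / c := by
    have : (0 : ℝ) ≤ d - 1 := by linarith
    positivity
  positivity

theorem variance_grr_general
    {Ω : Type*} [MeasureSpace Ω] [IsProbabilityMeasure (ℙ : Measure Ω)]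
    (d c : ℕ) (hd : 1 ≤ d) (hc : 2 ≤ c)
    (p q : ℝ) (hp : 0 ≤ p ∧ p ≤ 1) (hq : 0 ≤ q ∧ q ≤ 1)
    (n : ℕ)
    (f : ℝ) (hf0 : 0 ≤ f) (hf1 : f ≤ 1)
    (γ : ℝ) (hγ : γ = (1 / (d : ℝ)) * (q + f * (p - q) + ((d : ℝ) - 1) / (c : ℝ)))
    (X : Fin n → Ω → Bool)
    (hmeas : ∀ i, Measurable (X i))
    (hindep : iIndepFun X ℙ)
    (hbern : ∀ i, ℙ {ω | X i ω = true} = ENNReal.ofReal γ) :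
    variance (fun ω =>
        ((∑ i, if X i ω then (1 : ℝ) else 0) * (d : ℝ) * (c : ℝ)
          - (n : ℝ) * ((d : ℝ) - 1 + q * (c : ℝ)))
          / ((n : ℝ) * (c : ℝ) * (p - q))) ℙ
      = (d : ℝ) ^ 2 * γ * (1 - γ) / ((n : ℝ) * (p - q) ^ 2) := by
  have hγ0 : 0 ≤ γ := hγ ▸ rsfd_grr_report_prob_nonneg hd hp.1 hq.1 hf0 hf1
  have hprob : ∀ i, (ℙ : Measure Ω).real {ω | X i ω = true} = γ := fun i ↦ by
    rw [measureReal_def, hbern i, ENNReal.toReal_ofReal hγ0]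
  have hcount : Measurable fun ω ↦ ∑ i, if X i ω then (1 : ℝ) else 0 :=
    Finset.measurable_fun_sum Finset.univ fun i _ ↦ measurable_ite_bool (hmeas i)
  simp_rw [mul_assoc _ (d : ℝ) (c : ℝ)]
  rw [variance_mul_sub_div_const hcount.aestronglyMeasurable,
    variance_sum_ite_of_iIndepFun hmeas hindep hprob, Fintype.card_fin]
  have hc0 : (c : ℝ) ≠ 0 := Nat.cast_ne_zero.2 (by omega)
  field_simp

/-- Variance of the RS+FD[GRR] estimator (Theorem `variance_grr`). -/
theorem variance_grr
    {Ω : Type*} [MeasureSpace Ω] [IsProbabilityMeasure (ℙ : Measure Ω)]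
    (d c : ℕ) (hd : 1 ≤ d) (hc : 2 ≤ c)
    (p q : ℝ) (hp : 0 ≤ p ∧ p ≤ 1) (hq : 0 ≤ q ∧ q ≤ 1) (hpq : p ≠ q)
    (hqdef : q = (1 - p) / ((c : ℝ) - 1))
    (n : ℕ) (hn : 0 < n)
    (f : ℝ) (hf0 : 0 ≤ f) (hf1 : f ≤ 1)
    (γ : ℝ) (hγ : γ = (1 / (d : ℝ)) * (q + f * (p - q) + ((d : ℝ) - 1) / (c : ℝ)))
    (X : Fin n → Ω → Bool)
    (hmeas : ∀ i, Measurable (X i))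
    (hindep : iIndepFun X ℙ)
    (hbern : ∀ i, ℙ {ω | X i ω = true} = ENNReal.ofReal γ) :
    variance (fun ω =>
        ((∑ i, if X i ω then (1 : ℝ) else 0) * (d : ℝ) * (c : ℝ)
          - (n : ℝ) * ((d : ℝ) - 1 + q * (c : ℝ)))
          / ((n : ℝ) * (c : ℝ) * (p - q))) ℙ
      = (d : ℝ) ^ 2 * γ * (1 - γ) / ((n : ℝ) * (p - q) ^ 2) :=
  variance_grr_general d c hd hc p q hp hq n f hf0 hf1 γ hγ X hmeas hindep hbern
end

section
/- Variance of the RS+FD[OUE-z] estimator (Theorem 'variance_oue_z'): let d ≥ 1 be an integer, p, q ∈ [0,1] with p ≠ q, let n be a positive integer, let 0 ≤ f ≤ 1, and set γ = (1/d)·(d·q + f·(p−q)) (the marginal probability that a user reports bit 1 for v when each user independently holds v with probability f under the RS+FD[OUE-z] mechanism). If N is the sum of n i.i.d. Bernoulli(γ) indicator random variables, then the estimator f̂ = d·(N − n·q)/(n·(p−q)) has variance Var(f̂) = d²·γ·(1−γ)/(n·(p−q)²). -/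
open MeasureTheory ProbabilityTheory

/-!
The count `N` is a sum of `n` independent Bernoulli(γ) indicators, so `Var N = n γ (1 - γ)`,
and the estimator is an affine function of `N` with slope `d / (n (p - q))`.
-/

section

variable {Ω : Type*} {m : MeasurableSpace Ω} {μ : Measure Ω} [IsProbabilityMeasure μ]

lemma memLp_indicator_one (p : ENNReal) {s : Set Ω} (hs : MeasurableSet s) :
    MemLp (s.indicator (1 : Ω → ℝ)) p μ :=
  memLp_indicator_const p hs 1 (.inr (measure_ne_top μ s))

lemma variance_indicator_one {s : Set Ω} (hs : MeasurableSet s) :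
    Var[s.indicator 1; μ] = μ.real s * (1 - μ.real s) := by
  have hsq : s.indicator (1 : Ω → ℝ) ^ 2 = s.indicator 1 := by
    ext ω; by_cases h : ω ∈ s <;> simp [h]
  rw [variance_eq_sub (memLp_indicator_one 2 hs), hsq, integral_indicator_one hs]
  ring

lemma ProbabilityTheory.iIndepFun.variance_sum_ite {ι : Type*} [Fintype ι] {B : ι → Ω → Bool}
    (hB : ∀ i, Measurable (B i)) (hindep : iIndepFun B μ) {r : ℝ}
    (hr : ∀ i, μ.real {ω | B i ω} = r) :
    Var[fun ω => ∑ i, if B i ω then (1 : ℝ) else 0; μ] = Fintype.card ι * (r * (1 - r)) := by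
  have hset i : MeasurableSet {ω | B i ω} := hB i (measurableSet_singleton true)
  have hcomp i : {ω | B i ω}.indicator (1 : Ω → ℝ) = (fun b => if b then 1 else 0) ∘ B i := by
    ext ω; simp [Set.indicator_apply]
  have hpair : Set.Pairwise (Finset.univ : Finset ι)
      fun i j => IndepFun ({ω | B i ω}.indicator (1 : Ω → ℝ))
        ({ω | B j ω}.indicator (1 : Ω → ℝ)) μ := by
    intro i _ j _ hij
    rw [hcomp, hcomp]
    exact (hindep.indepFun hij).comp measurable_from_top measurable_from_top
  have hsum : (fun ω => ∑ i, if B i ω then (1 : ℝ) else 0) = ∑ i, {ω | B i ω}.indicator 1 := by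
    ext ω; simp [Set.indicator_apply]
  rw [hsum, IndepFun.variance_sum (fun i _ => memLp_indicator_one 2 (hset i)) hpair]
  simp [variance_indicator_one (hset _), hr]

end

lemma variance_mul_sub_div {Ω : Type*} {m : MeasurableSpace Ω} {μ : Measure Ω}
    [IsProbabilityMeasure μ] {S : Ω → ℝ} (hS : AEStronglyMeasurable S μ) (a b c : ℝ) :
    Var[fun ω => a * (S ω - b) / c; μ] = a ^ 2 * Var[S; μ] / c ^ 2 := by
  simp_rw [mul_div_right_comm a]
  rw [variance_const_mul, variance_sub_const hS, div_pow]
  ring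

theorem variance_oue_z_general
    {Ω : Type*} [MeasureSpace Ω] [IsProbabilityMeasure (ℙ : Measure Ω)]
    (d : ℕ) (hd : 1 ≤ d)
    (p q : ℝ) (hp : 0 ≤ p ∧ p ≤ 1) (hq : 0 ≤ q ∧ q ≤ 1)
    (n : ℕ) (hn : 0 < n)
    (f : ℝ) (hf0 : 0 ≤ f) (hf1 : f ≤ 1)
    (γ : ℝ) (hγ : γ = (1 / (d : ℝ)) * ((d : ℝ) * q + f * (p - q)))
    (X : Fin n → Ω → Bool)
    (hmeas : ∀ i, Measurable (X i))
    (hindep : iIndepFun X ℙ)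
    (hbern : ∀ i, ℙ {ω | X i ω = true} = ENNReal.ofReal γ) :
    variance (fun ω =>
        (d : ℝ) * ((∑ i, if X i ω then (1 : ℝ) else 0) - (n : ℝ) * q)
          / ((n : ℝ) * (p - q))) ℙ
      = (d : ℝ) ^ 2 * γ * (1 - γ) / ((n : ℝ) * (p - q) ^ 2) := by
  -- `ENNReal.ofReal` sends negative reals to `0`, so `hbern` pins down the law only for `γ ≥ 0`.
  have hγ_nonneg : 0 ≤ γ := by
    have hd' : (1 : ℝ) ≤ d := by exact_mod_cast hd
    have hw₀ : 0 ≤ f / d := by positivity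
    have hw₁ : f / d ≤ 1 := div_le_one_of_le₀ (hf1.trans hd') (by positivity)
    have hconv : γ = (1 - f / d) * q + f / d * p := by rw [hγ]; field_simp; ring
    rw [hconv]
    exact add_nonneg (mul_nonneg (sub_nonneg.2 hw₁) hq.1) (mul_nonneg hw₀ hp.1)
  have hcount : Var[fun ω => ∑ i, if X i ω then (1 : ℝ) else 0; ℙ] = n * (γ * (1 - γ)) := by
    simpa using hindep.variance_sum_ite hmeas fun i => by
      rw [measureReal_def, hbern i, ENNReal.toReal_ofReal hγ_nonneg]
  have hS : Measurable fun ω => ∑ i, if X i ω then (1 : ℝ) else 0 :=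
    Finset.measurable_fun_sum _ fun i _ =>
      (measurable_from_top (f := fun b : Bool => if b then (1 : ℝ) else 0)).comp (hmeas i)
  have hn' : (n : ℝ) ≠ 0 := by exact_mod_cast hn.ne'
  rw [variance_mul_sub_div hS.aestronglyMeasurable, hcount]
  field_simp

/-- Variance of the RS+FD[OUE-z] estimator (Theorem `variance_oue_z`). -/
theorem variance_oue_z
    {Ω : Type*} [MeasureSpace Ω] [IsProbabilityMeasure (ℙ : Measure Ω)]
    (d : ℕ) (hd : 1 ≤ d)
    (p q : ℝ) (hp : 0 ≤ p ∧ p ≤ 1) (hq : 0 ≤ q ∧ q ≤ 1) (hpq : p ≠ q)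
    (n : ℕ) (hn : 0 < n)
    (f : ℝ) (hf0 : 0 ≤ f) (hf1 : f ≤ 1)
    (γ : ℝ) (hγ : γ = (1 / (d : ℝ)) * ((d : ℝ) * q + f * (p - q)))
    (X : Fin n → Ω → Bool)
    (hmeas : ∀ i, Measurable (X i))
    (hindep : iIndepFun X ℙ)
    (hbern : ∀ i, ℙ {ω | X i ω = true} = ENNReal.ofReal γ) :
    variance (fun ω =>
        (d : ℝ) * ((∑ i, if X i ω then (1 : ℝ) else 0) - (n : ℝ) * q)
          / ((n : ℝ) * (p - q))) ℙ
      = (d : ℝ) ^ 2 * γ * (1 - γ) / ((n : ℝ) * (p - q) ^ 2) :=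
  variance_oue_z_general d hd p q hp hq n hn f hf0 hf1 γ hγ X hmeas hindep hbern
end

section
/- Variance of the RS+FD[OUE-r] estimator (Theorem 'variance_oue_r'): let d ≥ 1 and c ≥ 2 be integers, p, q ∈ [0,1] with p ≠ q, let n be a positive integer, let 0 ≤ f ≤ 1, and set γ = (1/d)·(q + f·(p−q) + ((d−1)/c)·(p + (c−1)·q)) (the marginal probability that a user reports bit 1 for v when each user independently holds v with probability f under the RS+FD[OUE-r] mechanism). If N is the sum of n i.i.d. Bernoulli(γ) indicator random variables, then the estimator f̂ = (N·d·c − n·(q·c + (p−q)·(d−1) + q·c·(d−1)))/(n·c·(p−q)) has variance Var(f̂) = d²·γ·(1−γ)/(n·(p−q)²). -/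
/-!
The count `N` is a sum of `n` independent Bernoulli(γ) indicators, so `Var N = n γ (1 - γ)`.
The estimator is affine in `N` with slope `d c / (n c (p - q))`, which scales this variance by the
square of the slope.
-/

open MeasureTheory ProbabilityTheory

section BoolIndicator

variable {Ω : Type*} [MeasurableSpace Ω] {μ : Measure Ω} [IsProbabilityMeasure μ]

lemma measurable_boolIndicator {X : Ω → Bool} (hX : Measurable X) :
    Measurable fun ω ↦ if X ω then (1 : ℝ) else 0 :=
  (measurable_from_top (f := fun b : Bool ↦ if b then (1 : ℝ) else 0)).comp hX

lemma variance_boolIndicator {X : Ω → Bool} (hX : Measurable X) {γ : ℝ} (hγ : 0 ≤ γ)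
    (hprob : μ {ω | X ω = true} = ENNReal.ofReal γ) :
    Var[fun ω ↦ if X ω then (1 : ℝ) else 0; μ] = γ * (1 - γ) := by
  have h1 : {ω | (if X ω then (1 : ℝ) else 0) = 1} = {ω | X ω = true} := by
    ext ω; cases X ω <;> simp
  have h0 : {ω | (if X ω then (1 : ℝ) else 0) = 0} = {ω | X ω = true}ᶜ := by
    ext ω; cases X ω <;> simp
  have hset : MeasurableSet {ω | X ω = true} := hX (measurableSet_singleton true)
  have hreal : μ.real {ω | X ω = true} = γ := by
    rw [measureReal_def, hprob, ENNReal.toReal_ofReal hγ]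
  rw [variance_of_ae_eq_zero_or_one (measurable_boolIndicator hX).aemeasurable
    (.of_forall fun ω ↦ by cases X ω <;> simp), h0, h1, probReal_compl_eq_one_sub hset, hreal,
    mul_comm]

lemma variance_sum_boolIndicator {ι : Type*} [Fintype ι] {X : ι → Ω → Bool}
    (hX : ∀ i, Measurable (X i)) (hindep : Pairwise fun i j ↦ IndepFun (X i) (X j) μ)
    {γ : ℝ} (hγ : 0 ≤ γ) (hprob : ∀ i, μ {ω | X i ω = true} = ENNReal.ofReal γ) :
    Var[fun ω ↦ ∑ i, if X i ω then (1 : ℝ) else 0; μ] = Fintype.card ι * (γ * (1 - γ)) := by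
  set Y : ι → Ω → ℝ := fun i ω ↦ if X i ω then 1 else 0
  have hY : ∀ i, MemLp (Y i) 2 μ := fun i ↦
    memLp_of_bounded (a := 0) (b := 1) (.of_forall fun ω ↦ by cases X i ω <;> simp)
      (measurable_boolIndicator (hX i)).aestronglyMeasurable 2
  have hYindep : Set.Pairwise ↑(Finset.univ : Finset ι) fun i j ↦ IndepFun (Y i) (Y j) μ :=
    fun i _ j _ hij ↦ (hindep hij).comp (φ := fun b : Bool ↦ if b then (1 : ℝ) else 0)
      (ψ := fun b : Bool ↦ if b then (1 : ℝ) else 0) measurable_from_top measurable_from_top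
  have hsum := IndepFun.variance_sum (fun i _ ↦ hY i) hYindep
  simp only [Finset.sum_fn] at hsum
  rw [hsum]
  simp only [Y, variance_boolIndicator (hX _) hγ (hprob _), Finset.sum_const, Finset.card_univ,
    nsmul_eq_mul]

end BoolIndicator

lemma variance_mul_const_sub_const_div {Ω : Type*} [MeasurableSpace Ω] {μ : Measure Ω}
    [IsProbabilityMeasure μ] {S : Ω → ℝ} (hS : AEStronglyMeasurable S μ) (a b k : ℝ) :
    Var[fun ω ↦ (S ω * a - b) / k; μ] = Var[S; μ] * (a / k) ^ 2 := by
  simp_rw [sub_div, mul_div_assoc]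
  rw [variance_sub_const (by fun_prop), variance_mul_const]

lemma reportProb_nonneg {d c p q f : ℝ} (hd : 1 ≤ d) (hc : 1 ≤ c) (hp : 0 ≤ p) (hq : 0 ≤ q)
    (hf0 : 0 ≤ f) (hf1 : f ≤ 1) :
    0 ≤ 1 / d * (q + f * (p - q) + (d - 1) / c * (p + (c - 1) * q)) := by
  have hvalue : 0 ≤ q + f * (p - q) := by
    linarith [mul_nonneg (sub_nonneg.2 hf1) hq, mul_nonneg hf0 hp]
  have hfake : 0 ≤ (d - 1) / c * (p + (c - 1) * q) :=
    mul_nonneg (div_nonneg (by linarith) (by linarith))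
      (add_nonneg hp (mul_nonneg (by linarith) hq))
  exact mul_nonneg (one_div_nonneg.2 (by linarith)) (add_nonneg hvalue hfake)

/-- Variance of the RS+FD[OUE-r] estimator (Theorem `variance_oue_r`). -/
theorem variance_oue_r
    {Ω : Type*} [MeasureSpace Ω] [IsProbabilityMeasure (ℙ : Measure Ω)]
    (d c : ℕ) (hd : 1 ≤ d) (hc : 2 ≤ c)
    (p q : ℝ) (hp : 0 ≤ p ∧ p ≤ 1) (hq : 0 ≤ q ∧ q ≤ 1) (hpq : p ≠ q)
    (n : ℕ) (hn : 0 < n)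
    (f : ℝ) (hf0 : 0 ≤ f) (hf1 : f ≤ 1)
    (γ : ℝ)
    (hγ : γ = (1 / (d : ℝ)) * (q + f * (p - q)
        + (((d : ℝ) - 1) / (c : ℝ)) * (p + ((c : ℝ) - 1) * q)))
    (X : Fin n → Ω → Bool)
    (hmeas : ∀ i, Measurable (X i))
    (hindep : iIndepFun X ℙ)
    (hbern : ∀ i, ℙ {ω | X i ω = true} = ENNReal.ofReal γ) :
    variance (fun ω =>
        ((∑ i, if X i ω then (1 : ℝ) else 0) * (d : ℝ) * (c : ℝ)
          - (n : ℝ) * (q * (c : ℝ) + (p - q) * ((d : ℝ) - 1) + q * (c : ℝ) * ((d : ℝ) - 1)))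
          / ((n : ℝ) * (c : ℝ) * (p - q))) ℙ
      = (d : ℝ) ^ 2 * γ * (1 - γ) / ((n : ℝ) * (p - q) ^ 2) := by
  have hγ0 : 0 ≤ γ := hγ ▸ reportProb_nonneg (by exact_mod_cast hd)
    (by exact_mod_cast one_le_two.trans hc) hp.1 hq.1 hf0 hf1
  have hsum := variance_sum_boolIndicator hmeas (fun i j hij ↦ hindep.indepFun hij) hγ0 hbern
  simp only [mul_assoc _ (d : ℝ) (c : ℝ)]
  rw [variance_mul_const_sub_const_div
    (Finset.measurable_fun_sum _ fun i _ ↦ measurable_boolIndicator (hmeas i)).aestronglyMeasurable,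
    hsum, Fintype.card_fin]
  have : (n : ℝ) ≠ 0 := Nat.cast_ne_zero.2 hn.ne'
  have : (c : ℝ) ≠ 0 := Nat.cast_ne_zero.2 (by omega)
  have : p - q ≠ 0 := sub_ne_zero.2 hpq
  field_simp
end

section
/- Monotonicity of the GRR/OUE sampling variance factor: the function y(x) = e^{1/x} / (x·(e^{1/x} − 1)²) is strictly increasing on (0, ∞); that is, for all real numbers x₁, x₂ with 0 < x₁ < x₂ one has e^{1/x₁}/(x₁·(e^{1/x₁} − 1)²) < e^{1/x₂}/(x₂·(e^{1/x₂} − 1)²). -/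
/-!
Substituting `t = 1/x` and using `(e^t - 1)² = 2 e^t (cosh t - 1)`, the factor becomes
`t / (2 (cosh t - 1))`. Since `cosh` is strictly convex, the secant slope
`(cosh t - cosh 0) / (t - 0)` is strictly increasing in `t`, and it is positive for `t > 0`;
as `x` increases, `t` decreases, so the factor increases.
-/

open Real Set

theorem Real.strictConvexOn_cosh : StrictConvexOn ℝ univ cosh :=
  strictConvexOn_univ_of_deriv2_pos continuous_cosh fun x => by
    simpa only [Function.iterate_succ, Function.iterate_zero, Function.comp_apply, id,
      deriv_cosh, deriv_sinh] using cosh_pos x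

theorem Real.strictMonoOn_cosh_sub_one_div : StrictMonoOn (fun t => (cosh t - 1) / t) (Ioi 0) :=
  fun s hs t ht hst => by
    simpa only [cosh_zero, sub_zero] using
      strictConvexOn_cosh.secant_strict_mono (mem_univ 0) (mem_univ s) (mem_univ t)
        (ne_of_gt hs) (ne_of_gt ht) hst

theorem Real.exp_div_exp_sub_one_sq (t : ℝ) :
    exp t / (exp t - 1) ^ 2 = 1 / (2 * (cosh t - 1)) := by
  have hsq : (exp t - 1) ^ 2 = exp t * (2 * (cosh t - 1)) := by
    rw [cosh_eq, exp_neg]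
    field_simp
    ring
  rw [hsq, div_mul_cancel_left₀ (exp_ne_zero t), one_div]

/-- Monotonicity of the GRR/OUE sampling variance factor:
`y(x) = e^{1/x} / (x·(e^{1/x} − 1)²)` is strictly increasing on `(0, ∞)`. -/
theorem grr_oue_variance_factor_strict_mono (x₁ x₂ : ℝ) (h₁ : 0 < x₁) (h₁₂ : x₁ < x₂) :
    Real.exp (1 / x₁) / (x₁ * (Real.exp (1 / x₁) - 1) ^ 2)
      < Real.exp (1 / x₂) / (x₂ * (Real.exp (1 / x₂) - 1) ^ 2) := by
  have h₂ : 0 < x₂ := h₁.trans h₁₂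
  have factor_eq : ∀ x : ℝ, exp (1 / x) / (x * (exp (1 / x) - 1) ^ 2)
      = 1 / (2 * ((cosh (1 / x) - 1) / (1 / x))) := fun x => by
    rw [mul_comm x, ← div_div, exp_div_exp_sub_one_sq, div_div_eq_mul_div, div_one, div_div,
      mul_assoc]
  have slope_pos : 0 < (cosh (1 / x₂) - 1) / (1 / x₂) :=
    div_pos (sub_pos.2 (one_lt_cosh.2 (by positivity))) (by positivity)
  have slope_lt : (cosh (1 / x₂) - 1) / (1 / x₂) < (cosh (1 / x₁) - 1) / (1 / x₁) :=
    strictMonoOn_cosh_sub_one_div (by simpa using h₂) (by simpa using h₁)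
      (one_div_lt_one_div_of_lt h₁ h₁₂)
  rw [factor_eq, factor_eq]
  gcongr
end

section
/- Monotonicity of the SUE sampling variance factor: the function y₂(x) = e^{1/(2x)} / (x·(e^{1/(2x)} − 1)²) is strictly increasing on (0, ∞); that is, for all real numbers x₁, x₂ with 0 < x₁ < x₂ one has e^{1/(2x₁)}/(x₁·(e^{1/(2x₁)} − 1)²) < e^{1/(2x₂)}/(x₂·(e^{1/(2x₂)} − 1)²). -/
open Real

lemma sinh_strictConvexOn : StrictConvexOn ℝ (Set.Ici (0:ℝ)) Real.sinh := by
  apply StrictMonoOn.strictConvexOn_of_deriv (convex_Ici 0)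
    Real.continuous_sinh.continuousOn
  rw [Real.deriv_sinh, interior_Ici]
  exact Real.cosh_strictMonoOn.mono (Set.Ioi_subset_Ici le_rfl)

/-- `λ * sinh b < sinh (λ * b)` for `λ > 1`, `b > 0`. -/
lemma mul_sinh_lt (l b : ℝ) (hl : 1 < l) (hb : 0 < b) :
    l * Real.sinh b < Real.sinh (l * b) := by
  have hl0 : 0 < l := lt_trans one_pos hl
  have h := sinh_strictConvexOn.2 (Set.mem_Ici.2 le_rfl)
    (Set.mem_Ici.2 (le_of_lt (mul_pos hl0 hb)))
    (by positivity : (0:ℝ) ≠ l * b)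
    (by have h' : 1/l < 1 := (div_lt_one hl0).2 hl
        linarith : (0:ℝ) < 1 - 1/l)
    (by positivity : (0:ℝ) < 1/l)
    (by ring : (1 - 1/l) + 1/l = 1)
  simp only [smul_eq_mul, mul_zero, zero_add, Real.sinh_zero] at h
  have hb' : (1/l) * (l * b) = b := by field_simp
  rw [hb'] at h
  have h2 := (mul_lt_mul_iff_right₀ hl0).2 h
  calc l * Real.sinh b < l * ((1/l) * Real.sinh (l * b)) := h2
    _ = Real.sinh (l * b) := by field_simp

/-- Key: for `0 < b < a`, `a * sinh(b/2)^2 < b * sinh(a/2)^2`. -/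
lemma key (a b : ℝ) (hb : 0 < b) (hba : b < a) :
    a * Real.sinh (b/2) ^ 2 < b * Real.sinh (a/2) ^ 2 := by
  have ha : 0 < a := lt_trans hb hba
  have hl : 1 < a / b := (one_lt_div hb).2 hba
  have hb2 : 0 < b / 2 := by linarith
  have hsb : 0 < Real.sinh (b/2) := Real.sinh_pos_iff.2 hb2
  have h1 : (a/b) * Real.sinh (b/2) < Real.sinh (a/2) := by
    have h := mul_sinh_lt (a/b) (b/2) hl hb2
    have he : (a/b) * (b/2) = a/2 := by field_simp
    rwa [he] at h
  have hpos : 0 < (a/b) * Real.sinh (b/2) := by positivity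
  have h2 : ((a/b) * Real.sinh (b/2))^2 < Real.sinh (a/2) ^ 2 :=
    pow_lt_pow_left₀ h1 hpos.le two_ne_zero
  have h3 : (a/b)^2 * Real.sinh (b/2)^2 < Real.sinh (a/2)^2 := by
    calc (a/b)^2 * Real.sinh (b/2)^2 = ((a/b) * Real.sinh (b/2))^2 := by ring
      _ < _ := h2
  have hlt : (a/b) < (a/b)^2 := by nlinarith
  have h4 : (a/b) * Real.sinh (b/2)^2 < (a/b)^2 * Real.sinh (b/2)^2 :=
    mul_lt_mul_of_pos_right hlt (pow_pos hsb 2)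
  have h5 : (a/b) * Real.sinh (b/2)^2 < Real.sinh (a/2)^2 := h4.trans h3
  calc a * Real.sinh (b/2)^2 = b * ((a/b) * Real.sinh (b/2)^2) := by field_simp
    _ < b * Real.sinh (a/2)^2 := (mul_lt_mul_iff_right₀ hb).2 h5

/-- Rewrite `exp s / (x (exp s - 1)^2)` with `s = 1/(2x)` as `s / (2 sinh(s/2)^2)`. -/
lemma y2_eq (x : ℝ) (hx : 0 < x) :
    Real.exp (1/(2*x)) / (x * (Real.exp (1/(2*x)) - 1)^2)
      = (1/(2*x)) / (2 * Real.sinh ((1/(2*x))/2)^2) := by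
  set s := 1/(2*x) with hs
  have hxs : x = 1/(2*s) := by rw [hs]; field_simp
  have hes : Real.exp s = Real.exp (s/2) * Real.exp (s/2) := by
    rw [← Real.exp_add]; ring_nf
  have hone : Real.exp (s/2) * Real.exp (-(s/2)) = 1 := by
    rw [← Real.exp_add]; simp
  have hfac : Real.exp s - 1 = Real.exp (s/2) * (2 * Real.sinh (s/2)) := by
    rw [Real.sinh_eq]
    nlinarith [hes, hone]
  have hs0 : 0 < s := by rw [hs]; positivity
  have hsinh : 0 < Real.sinh (s/2) := Real.sinh_pos_iff.2 (by linarith)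
  have hexp : 0 < Real.exp (s/2) := Real.exp_pos _
  rw [hfac, hxs]
  have h2 : (Real.exp (s/2) * (2 * Real.sinh (s/2)))^2
      = Real.exp s * (4 * Real.sinh (s/2)^2) := by
    rw [hes]; ring
  rw [h2, hes]
  field_simp
  ring

/-- Monotonicity of the SUE sampling variance factor:
`y₂(x) = e^{1/(2x)} / (x·(e^{1/(2x)} − 1)²)` is strictly increasing on `(0, ∞)`. -/
theorem sue_variance_factor_strict_mono (x₁ x₂ : ℝ) (h₁ : 0 < x₁) (h₁₂ : x₁ < x₂) :
    Real.exp (1 / (2 * x₁)) / (x₁ * (Real.exp (1 / (2 * x₁)) - 1) ^ 2)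
      < Real.exp (1 / (2 * x₂)) / (x₂ * (Real.exp (1 / (2 * x₂)) - 1) ^ 2) := by
  have h₂ : 0 < x₂ := lt_trans h₁ h₁₂
  rw [y2_eq x₁ h₁, y2_eq x₂ h₂]
  set a := 1/(2*x₁) with ha
  set b := 1/(2*x₂) with hb
  have hb0 : 0 < b := by rw [hb]; positivity
  have hba : b < a := by
    rw [ha, hb]
    apply div_lt_div_of_pos_left one_pos (by positivity) (by linarith)
  have hk := key a b hb0 hba
  have hsa : 0 < Real.sinh (a/2) := Real.sinh_pos_iff.2 (by linarith)
  have hsb : 0 < Real.sinh (b/2) := Real.sinh_pos_iff.2 (by linarith)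
  rw [div_lt_div_iff₀ (by positivity) (by positivity)]
  nlinarith
end

section
/- Optimality of r = 1 for sampled GRR: for every real ε > 0, all positive integers n and d, every integer c ≥ 2, and every integer r with 1 ≤ r ≤ d, the sampled GRR variance satisfies d·(e^{ε} + c − 2)/(n·(e^{ε} − 1)²) ≤ d·(e^{ε/r} + c − 2)/(n·r·(e^{ε/r} − 1)²); that is, σ²₂,GRR(r) = d·(e^{ε/r} + c − 2)/(n·r·(e^{ε/r} − 1)²) attains its minimum over r ∈ {1, …, d} at r = 1. -/
/-!
Write `y = e^{ε/r}`, so that `e^ε = y^r`. Bernoulli's inequality gives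
`e^ε - 1 ≥ r (y - 1)`, and splitting the numerator as `(e^ε - 1) + (c - 1)` turns the
left-hand side into `1 / (e^ε - 1) + (c - 1) / (e^ε - 1)²`, which is decreasing in
`e^ε - 1`; bounding `e^ε - 1` below by `r (y - 1)` and using `r ≤ r²` yields the
right-hand side.
-/

open Real

lemma nat_mul_exp_sub_one_le (r : ℕ) (x : ℝ) : r * (exp x - 1) ≤ exp (r * x) - 1 := by
  have h := one_add_mul_le_pow (by linarith [exp_pos x] : (-2 : ℝ) ≤ exp x - 1) r
  rw [add_sub_cancel, ← exp_nat_mul] at h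
  linarith

lemma add_div_sq_le_of_mul_le {a b r k : ℝ} (ha : 0 < a) (hr : 1 ≤ r) (hk : 0 ≤ k)
    (hb : r * a ≤ b) : (b + k) / b ^ 2 ≤ (a + k) / (r * a ^ 2) := by
  have hra : 0 < r * a := by positivity
  have hb0 : 0 < b := hra.trans_le hb
  rw [div_le_div_iff₀ (by positivity) (by positivity)]
  have hlin : b * (r * a ^ 2) ≤ a * b ^ 2 := by
    nlinarith [mul_le_mul_of_nonneg_left hb (mul_pos ha hb0).le]
  have hsq : r * a ^ 2 ≤ b ^ 2 := by nlinarith [mul_le_mul hb hb hra.le hb0.le]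
  nlinarith [mul_le_mul_of_nonneg_left hsq hk]

lemma exp_add_div_sq_le {x c : ℝ} {r : ℕ} (hx : 0 < x) (hr : 1 ≤ r) (hc : 1 ≤ c) :
    (exp (r * x) + c - 2) / (exp (r * x) - 1) ^ 2 ≤ (exp x + c - 2) / (r * (exp x - 1) ^ 2) := by
  have h := add_div_sq_le_of_mul_le (by linarith [add_one_lt_exp hx.ne']) (by exact_mod_cast hr)
    (sub_nonneg.2 hc) (nat_mul_exp_sub_one_le r x)
  convert h using 2 <;> ring

theorem sampled_grr_optimal_r_one_general (ε : ℝ) (hε : 0 < ε) (n d : ℕ)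
    (c : ℕ) (hc : 2 ≤ c) (r : ℕ) (hr1 : 1 ≤ r) :
    (d : ℝ) * (Real.exp ε + (c : ℝ) - 2) / ((n : ℝ) * (Real.exp ε - 1) ^ 2)
      ≤ (d : ℝ) * (Real.exp (ε / (r : ℝ)) + (c : ℝ) - 2)
          / ((n : ℝ) * (r : ℝ) * (Real.exp (ε / (r : ℝ)) - 1) ^ 2) := by
  have hr : (0 : ℝ) < r := by exact_mod_cast hr1
  have hε_eq : ε = r * (ε / r) := (mul_div_cancel₀ ε hr.ne').symm
  have key := exp_add_div_sq_le (c := c) (div_pos hε hr) hr1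
    (by exact_mod_cast (by omega : 1 ≤ c))
  rw [← hε_eq] at key
  rw [mul_div_mul_comm, mul_assoc, mul_div_mul_comm]
  exact mul_le_mul_of_nonneg_left key (by positivity)

/-- Optimality of `r = 1` for sampled GRR: the sampled GRR variance
`σ²₂,GRR(r) = d·(e^{ε/r} + c − 2)/(n·r·(e^{ε/r} − 1)²)` attains its minimum
over `r ∈ {1, …, d}` at `r = 1`. -/
theorem sampled_grr_optimal_r_one (ε : ℝ) (hε : 0 < ε) (n d : ℕ) (hn : 0 < n) (hd : 0 < d)
    (c : ℕ) (hc : 2 ≤ c) (r : ℕ) (hr1 : 1 ≤ r) (hrd : r ≤ d) :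
    (d : ℝ) * (Real.exp ε + (c : ℝ) - 2) / ((n : ℝ) * (Real.exp ε - 1) ^ 2)
      ≤ (d : ℝ) * (Real.exp (ε / (r : ℝ)) + (c : ℝ) - 2)
          / ((n : ℝ) * (r : ℝ) * (Real.exp (ε / (r : ℝ)) - 1) ^ 2) :=
  sampled_grr_optimal_r_one_general ε hε n d c hc r hr1
end

section
/- Optimality of r = 1 for sampled OUE: for every real ε > 0, all positive integers n and d, and every integer r with 1 ≤ r ≤ d, the sampled OUE variance satisfies d·4·e^{ε}/(n·(e^{ε} − 1)²) ≤ d·4·e^{ε/r}/(n·r·(e^{ε/r} − 1)²); that is, σ²₂,OUE(r) = d·4·e^{ε/r}/(n·r·(e^{ε/r} − 1)²) attains its minimum over r ∈ {1, …, d} at r = 1. -/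
/-!
Since `(eˣ - 1)² / eˣ = 2 (cosh x - 1)`, the claim is `r (cosh (ε/r) - 1) ≤ cosh ε - 1`,
which holds because `cosh - 1` is convex and vanishes at `0`; convexity of `cosh` is read off
from convexity of `exp` applied at `x` and at `-x`.
-/

open Set

namespace Real

lemma cosh_mul_le {t : ℝ} (ht₀ : 0 ≤ t) (ht₁ : t ≤ 1) (x : ℝ) :
    cosh (t * x) ≤ t * cosh x + (1 - t) := by
  have exp_mul_le (y : ℝ) : exp (t * y) ≤ t * exp y + (1 - t) := by
    simpa using convexOn_exp.2 (mem_univ y) (mem_univ 0) ht₀ (sub_nonneg.2 ht₁) (by ring)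
  rw [cosh_eq, cosh_eq, ← mul_neg]
  linarith [exp_mul_le x, exp_mul_le (-x)]

lemma exp_sub_one_sq (x : ℝ) : (exp x - 1) ^ 2 = exp x * (2 * (cosh x - 1)) := by
  rw [cosh_eq, exp_neg]
  field_simp
  ring

lemma exp_div_exp_sub_one_sq_s11 (x : ℝ) : exp x / (exp x - 1) ^ 2 = (2 * (cosh x - 1))⁻¹ := by
  rw [exp_sub_one_sq, div_mul_cancel_left₀ (exp_pos x).ne']

theorem exp_div_exp_sub_one_sq_le {ε a : ℝ} (hε : ε ≠ 0) (ha : 1 ≤ a) :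
    exp ε / (exp ε - 1) ^ 2 ≤ exp (ε / a) / (a * (exp (ε / a) - 1) ^ 2) := by
  have ha₀ : 0 < a := zero_lt_one.trans_le ha
  have hcosh : 0 < cosh (ε / a) - 1 := sub_pos.2 (one_lt_cosh.2 (div_ne_zero hε ha₀.ne'))
  have hmul : a * cosh (ε / a) ≤ cosh ε + (a - 1) :=
    calc a * cosh (ε / a) = a * cosh (a⁻¹ * ε) := by rw [inv_mul_eq_div]
      _ ≤ a * (a⁻¹ * cosh ε + (1 - a⁻¹)) := by
        gcongr
        exact cosh_mul_le (inv_nonneg.2 ha₀.le) (inv_le_one_of_one_le₀ ha) ε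
      _ = cosh ε + (a - 1) := by field_simp
  rw [mul_comm a, ← div_div, exp_div_exp_sub_one_sq_s11, exp_div_exp_sub_one_sq_s11, div_eq_mul_inv,
    ← mul_inv]
  exact inv_anti₀ (by positivity) (by linarith)

end Real

theorem sampled_oue_optimal_r_one_general (ε : ℝ) (hε : 0 < ε) (n d : ℕ)
    (r : ℕ) (hr1 : 1 ≤ r) :
    (d : ℝ) * 4 * Real.exp ε / ((n : ℝ) * (Real.exp ε - 1) ^ 2)
      ≤ (d : ℝ) * 4 * Real.exp (ε / (r : ℝ))
          / ((n : ℝ) * (r : ℝ) * (Real.exp (ε / (r : ℝ)) - 1) ^ 2) := by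
  have hvar := Real.exp_div_exp_sub_one_sq_le hε.ne' (Nat.one_le_cast.2 hr1 : (1 : ℝ) ≤ r)
  calc (d : ℝ) * 4 * Real.exp ε / ((n : ℝ) * (Real.exp ε - 1) ^ 2)
      = d * 4 / n * (Real.exp ε / (Real.exp ε - 1) ^ 2) := by
        rw [div_mul_div_comm]
    _ ≤ d * 4 / n * (Real.exp (ε / r) / (r * (Real.exp (ε / r) - 1) ^ 2)) := by gcongr
    _ = _ := by rw [div_mul_div_comm, mul_assoc (n : ℝ)]

/-- Optimality of `r = 1` for sampled OUE: the sampled OUE variance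
`σ²₂,OUE(r) = d·4·e^{ε/r}/(n·r·(e^{ε/r} − 1)²)` attains its minimum
over `r ∈ {1, …, d}` at `r = 1`. -/
theorem sampled_oue_optimal_r_one (ε : ℝ) (hε : 0 < ε) (n d : ℕ) (hn : 0 < n) (hd : 0 < d)
    (r : ℕ) (hr1 : 1 ≤ r) (hrd : r ≤ d) :
    (d : ℝ) * 4 * Real.exp ε / ((n : ℝ) * (Real.exp ε - 1) ^ 2)
      ≤ (d : ℝ) * 4 * Real.exp (ε / (r : ℝ))
          / ((n : ℝ) * (r : ℝ) * (Real.exp (ε / (r : ℝ)) - 1) ^ 2) :=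
  sampled_oue_optimal_r_one_general ε hε n d r hr1
end

section
/- Optimality of r = 1 for sampled SUE: for every real ε > 0, all positive integers n and d, and every integer r with 1 ≤ r ≤ d, the sampled SUE variance satisfies d·e^{ε/2}/(n·(e^{ε/2} − 1)²) ≤ d·e^{ε/(2r)}/(n·r·(e^{ε/(2r)} − 1)²); that is, σ²₂,SUE(r) = d·e^{ε/(2r)}/(n·r·(e^{ε/(2r)} − 1)²) attains its minimum over r ∈ {1, …, d} at r = 1. -/
/-!
Writing `exp a / (exp a - 1)² = 1 / (4 sinh² (a / 2))`, the claim becomes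
`r sinh² (ε / (4r)) ≤ sinh² (ε / 4)`, which follows from the superadditivity of `sinh` on
`[0, ∞)` (giving `r sinh (ε / (4r)) ≤ sinh (ε / 4)`) together with `r ≤ r²`.
-/

namespace Real

lemma sinh_add_sinh_le_sinh_add {x y : ℝ} (hx : 0 ≤ x) (hy : 0 ≤ y) :
    sinh x + sinh y ≤ sinh (x + y) := by
  rw [sinh_add]
  nlinarith [one_le_cosh x, one_le_cosh y, sinh_nonneg_iff.2 hx, sinh_nonneg_iff.2 hy]

lemma nat_mul_sinh_le_sinh_nat_mul (k : ℕ) {y : ℝ} (hy : 0 ≤ y) :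
    k * sinh y ≤ sinh (k * y) := by
  induction k with
  | zero => simp
  | succ m ih =>
    calc ((m + 1 : ℕ) : ℝ) * sinh y = m * sinh y + sinh y := by push_cast; ring
      _ ≤ sinh (m * y) + sinh y := by gcongr
      _ ≤ sinh (m * y + y) := sinh_add_sinh_le_sinh_add (by positivity) hy
      _ = sinh ((m + 1 : ℕ) * y) := by push_cast; ring_nf

lemma exp_div_sq_exp_sub_one (a : ℝ) :
    exp a / (exp a - 1) ^ 2 = (4 * sinh (a / 2) ^ 2)⁻¹ := by
  have h : exp a - 1 = 2 * exp (a / 2) * sinh (a / 2) := by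
    have h1 : exp a = exp (a / 2) * exp (a / 2) := by rw [← exp_add, add_halves]
    have h2 : exp (a / 2) * exp (-(a / 2)) = 1 := by rw [← exp_add, add_neg_cancel, exp_zero]
    rw [sinh_eq]
    linear_combination h1 + h2
  have hsq : (exp a - 1) ^ 2 = exp a * (4 * sinh (a / 2) ^ 2) := by
    rw [h, mul_pow, mul_pow, ← exp_nat_mul]
    ring_nf
  rw [hsq, div_mul_cancel_left₀ (exp_pos a).ne']

lemma exp_div_sq_exp_sub_one_le_div_nat {k : ℕ} (hk : 1 ≤ k) {a : ℝ} (ha : 0 < a) :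
    exp a / (exp a - 1) ^ 2 ≤ exp (a / k) / (k * (exp (a / k) - 1) ^ 2) := by
  have hk' : (1 : ℝ) ≤ k := by exact_mod_cast hk
  have hs : 0 < sinh (a / k / 2) := sinh_pos_iff.2 (by positivity)
  have hks : k * sinh (a / k / 2) ≤ sinh (a / 2) := by
    have h := nat_mul_sinh_le_sinh_nat_mul k (y := a / k / 2) (by positivity)
    rwa [show (k : ℝ) * (a / k / 2) = a / 2 by field_simp] at h
  have hks2 : k * sinh (a / k / 2) ^ 2 ≤ sinh (a / 2) ^ 2 :=
    calc k * sinh (a / k / 2) ^ 2 ≤ (k * sinh (a / k / 2)) ^ 2 := by nlinarith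
      _ ≤ sinh (a / 2) ^ 2 := pow_le_pow_left₀ (by positivity) hks 2
  rw [exp_div_sq_exp_sub_one, mul_comm (k : ℝ), ← div_div, exp_div_sq_exp_sub_one, inv_div_left]
  exact inv_anti₀ (by positivity) (by linarith)

end Real

theorem sampled_sue_optimal_r_one_general (ε : ℝ) (hε : 0 < ε) (n d : ℕ)
    (r : ℕ) (hr1 : 1 ≤ r) :
    (d : ℝ) * Real.exp (ε / 2) / ((n : ℝ) * (Real.exp (ε / 2) - 1) ^ 2)
      ≤ (d : ℝ) * Real.exp (ε / (2 * (r : ℝ)))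
          / ((n : ℝ) * (r : ℝ) * (Real.exp (ε / (2 * (r : ℝ))) - 1) ^ 2) := by
  rw [mul_div_mul_comm, mul_assoc, mul_div_mul_comm, ← div_div ε]
  gcongr (d : ℝ) / n * ?_
  exact Real.exp_div_sq_exp_sub_one_le_div_nat hr1 (by positivity)

/-- Optimality of `r = 1` for sampled SUE: the sampled SUE variance
`σ²₂,SUE(r) = d·e^{ε/(2r)}/(n·r·(e^{ε/(2r)} − 1)²)` attains its minimum
over `r ∈ {1, …, d}` at `r = 1`. -/
theorem sampled_sue_optimal_r_one (ε : ℝ) (hε : 0 < ε) (n d : ℕ) (hn : 0 < n) (hd : 0 < d)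
    (r : ℕ) (hr1 : 1 ≤ r) (hrd : r ≤ d) :
    (d : ℝ) * Real.exp (ε / 2) / ((n : ℝ) * (Real.exp (ε / 2) - 1) ^ 2)
      ≤ (d : ℝ) * Real.exp (ε / (2 * (r : ℝ)))
          / ((n : ℝ) * (r : ℝ) * (Real.exp (ε / (2 * (r : ℝ))) - 1) ^ 2) :=
  sampled_sue_optimal_r_one_general ε hε n d r hr1
end

section
/- Single-report privacy of L-GRR: let ε∞ and ε₁ be reals with 0 < ε₁ ≤ ε∞ and let c ≥ 2 be an integer. Define p₁ = e^{ε∞}/(e^{ε∞} + c − 1), q₁ = (1 − p₁)/(c − 1), p₂ = (e^{ε₁+ε∞} − 1)/(−c·e^{ε₁} + (c − 1)·e^{ε∞} + e^{ε₁} + e^{ε₁+ε∞} − 1), and q₂ = (1 − p₂)/(c − 1). Then p₁·p₂ + q₁·q₂ = e^{ε₁}·(p₁·q₂ + q₁·p₂); equivalently, ln((p₁·p₂ + q₁·q₂)/(p₁·q₂ + q₁·p₂)) = ε₁. -/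
set_option maxHeartbeats 1000000


/-- Single-report privacy of L-GRR: with the parameters of the L-GRR protocol,
`p₁·p₂ + q₁·q₂ = e^{ε₁}·(p₁·q₂ + q₁·p₂)`; equivalently
`ln((p₁·p₂ + q₁·q₂)/(p₁·q₂ + q₁·p₂)) = ε₁`. -/
theorem lgrr_single_report_privacy
    (εinf ε₁ : ℝ) (h0 : 0 < ε₁) (h1 : ε₁ ≤ εinf)
    (c : ℕ) (hc : 2 ≤ c)
    (p₁ q₁ p₂ q₂ : ℝ)
    (hp₁ : p₁ = Real.exp εinf / (Real.exp εinf + (c : ℝ) - 1))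
    (hq₁ : q₁ = (1 - p₁) / ((c : ℝ) - 1))
    (hp₂ : p₂ = (Real.exp (ε₁ + εinf) - 1)
        / (-(c : ℝ) * Real.exp ε₁ + ((c : ℝ) - 1) * Real.exp εinf
            + Real.exp ε₁ + Real.exp (ε₁ + εinf) - 1))
    (hq₂ : q₂ = (1 - p₂) / ((c : ℝ) - 1)) :
    p₁ * p₂ + q₁ * q₂ = Real.exp ε₁ * (p₁ * q₂ + q₁ * p₂) ∧
    Real.log ((p₁ * p₂ + q₁ * q₂) / (p₁ * q₂ + q₁ * p₂)) = ε₁ := by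
  set A := Real.exp εinf with hA
  set B := Real.exp ε₁ with hB
  have hAB : Real.exp (ε₁ + εinf) = B * A := by rw [Real.exp_add]
  have hB1 : 1 < B := by rw [hB]; exact Real.one_lt_exp_iff.mpr h0
  have hA1 : 1 < A := by
    rw [hA]; exact Real.one_lt_exp_iff.mpr (lt_of_lt_of_le h0 h1)
  have hBA : B ≤ A := Real.exp_le_exp.mpr h1
  have hc1 : (1:ℝ) ≤ (c:ℝ) - 1 := by
    have : (2:ℝ) ≤ (c:ℝ) := by exact_mod_cast hc
    linarith
  have hcne : ((c:ℝ) - 1) ≠ 0 := by linarith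
  have hD1 : (0:ℝ) < A + (c:ℝ) - 1 := by linarith
  have hD1ne : A + (c:ℝ) - 1 ≠ 0 := ne_of_gt hD1
  have hD2 : (0:ℝ) < -(c:ℝ) * B + ((c:ℝ) - 1) * A + B + Real.exp (ε₁ + εinf) - 1 := by
    rw [hAB]
    nlinarith [mul_le_mul_of_nonneg_left hBA (by linarith : (0:ℝ) ≤ (c:ℝ) - 1)]
  have hD2ne : -(c:ℝ) * B + ((c:ℝ) - 1) * A + B + Real.exp (ε₁ + εinf) - 1 ≠ 0 :=
    ne_of_gt hD2
  rw [hAB] at hp₂ hD2 hD2ne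
  have hq₁' : q₁ = 1 / (A + (c:ℝ) - 1) := by
    rw [hq₁, hp₁, div_eq_div_iff hcne hD1ne, sub_mul, one_mul,
      div_mul_cancel₀ _ hD1ne]
    ring
  have hq₂' : q₂ = (A - B) / (-(c:ℝ) * B + ((c:ℝ) - 1) * A + B + B * A - 1) := by
    rw [hq₂, hp₂, div_eq_div_iff hcne hD2ne, sub_mul, one_mul,
      div_mul_cancel₀ _ hD2ne]
    ring
  have key : p₁ * p₂ + q₁ * q₂ = B * (p₁ * q₂ + q₁ * p₂) := by
    rw [hq₁', hq₂', hp₁, hp₂]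
    field_simp
    ring
  -- positivity of the denominator expression
  have hp₁pos : 0 < p₁ := by rw [hp₁]; positivity
  have hq₁pos : 0 < q₁ := by
    rw [hq₁, hp₁]
    apply div_pos
    · rw [sub_pos, div_lt_one hD1]; linarith
    · linarith
  have hp₂pos : 0 < p₂ := by
    rw [hp₂]
    apply div_pos _ hD2
    nlinarith
  have hq₂nonneg : 0 ≤ q₂ := by
    rw [hq₂]
    apply div_nonneg _ (by linarith)
    rw [hp₂, sub_nonneg, div_le_one hD2]
    nlinarith [mul_le_mul_of_nonneg_left hBA (by linarith : (0:ℝ) ≤ (c:ℝ) - 1)]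
  have hX : 0 < p₁ * q₂ + q₁ * p₂ := by positivity
  refine ⟨key, ?_⟩
  rw [key, mul_div_assoc, div_self (ne_of_gt hX), mul_one, hB, Real.log_exp]
end

section
/- Single-report privacy of L-OSUE: let ε∞ and ε₁ be reals with 0 < ε₁ ≤ ε∞. Define p₁ = 1/2, q₁ = 1/(e^{ε∞} + 1), p₂ = (1 − e^{ε₁+ε∞})/(e^{ε₁} − e^{ε∞} − e^{ε₁+ε∞} + 1), q₂ = 1 − p₂, and set p_s = p₁·p₂ + (1 − p₁)·q₂ and q_s = q₁·p₂ + (1 − q₁)·q₂. Then p_s = 1/2, q_s = 1/(e^{ε₁} + 1), and consequently p_s·(1 − q_s)/((1 − p_s)·q_s) = e^{ε₁}. -/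
/-!
The first round reports a 1-bit as 1 with probability `1/2`, so after the symmetric second round
it still does, whatever `p₂` is: `p_s = 1/2`. For a 0-bit, the composed probability
`q₁ p₂ + (1 - q₁)(1 - p₂)` is affine in `p₂` with slope `2 q₁ - 1 ≠ 0`, and the stated `p₂` is
exactly the solution of `q₁ p₂ + (1 - q₁)(1 - p₂) = 1/(e^{ε₁} + 1)`.
-/

/-- Probability of reporting `1` when the first round outputs `1` with probability `r` and the
second round keeps its input with probability `p` and flips it otherwise. -/
def rrCompose (r p : ℝ) : ℝ := r * p + (1 - r) * (1 - p)

theorem rrCompose_half (p : ℝ) : rrCompose (1 / 2) p = 1 / 2 := by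
  unfold rrCompose; ring

theorem rrCompose_eq_iff {r p t : ℝ} (hr : 1 - 2 * r ≠ 0) :
    rrCompose r p = t ↔ p = (1 - r - t) / (1 - 2 * r) := by
  rw [eq_div_iff hr, rrCompose]
  constructor <;> intro h <;> linarith

theorem rrCompose_oue_eq_inv_add_one {a b : ℝ} (ha : a + 1 ≠ 0) (hb : b + 1 ≠ 0) (hb₁ : b ≠ 1) :
    rrCompose (1 / (b + 1)) ((1 - a * b) / (a - b - a * b + 1)) = 1 / (a + 1) := by
  have hb_sub : b - 1 ≠ 0 := sub_ne_zero.mpr hb₁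
  have hr : 1 - 2 * (1 / (b + 1)) = (b - 1) / (b + 1) := by field_simp; ring
  have hden : a - b - a * b + 1 = (a + 1) * (1 - b) := by ring
  rw [rrCompose_eq_iff (hr ▸ div_ne_zero hb_sub hb), hr, hden]
  have hb_sub' : 1 - b ≠ 0 := sub_ne_zero.mpr hb₁.symm
  field_simp
  ring

theorem half_odds_ratio {a : ℝ} (ha : a + 1 ≠ 0) :
    1 / 2 * (1 - 1 / (a + 1)) / ((1 - 1 / 2) * (1 / (a + 1))) = a := by
  field_simp
  ring

/-- Single-report privacy of L-OSUE: with the parameters of the L-OSUE protocol,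
`p_s = 1/2`, `q_s = 1/(e^{ε₁} + 1)`, and `p_s·(1 − q_s)/((1 − p_s)·q_s) = e^{ε₁}`. -/
theorem losue_single_report_privacy
    (εinf ε₁ : ℝ) (h0 : 0 < ε₁) (h1 : ε₁ ≤ εinf)
    (p₁ q₁ p₂ q₂ ps qs : ℝ)
    (hp₁ : p₁ = 1 / 2)
    (hq₁ : q₁ = 1 / (Real.exp εinf + 1))
    (hp₂ : p₂ = (1 - Real.exp (ε₁ + εinf))
        / (Real.exp ε₁ - Real.exp εinf - Real.exp (ε₁ + εinf) + 1))
    (hq₂ : q₂ = 1 - p₂)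
    (hps : ps = p₁ * p₂ + (1 - p₁) * q₂)
    (hqs : qs = q₁ * p₂ + (1 - q₁) * q₂) :
    ps = 1 / 2 ∧ qs = 1 / (Real.exp ε₁ + 1) ∧
    ps * (1 - qs) / ((1 - ps) * qs) = Real.exp ε₁ := by
  subst hp₁ hq₁ hq₂
  have ha : Real.exp ε₁ + 1 ≠ 0 := by positivity
  have hb : Real.exp εinf + 1 ≠ 0 := by positivity
  have hb₁ : Real.exp εinf ≠ 1 := Real.exp_eq_one_iff _ |>.not.mpr (by linarith)
  have hps' : ps = 1 / 2 := hps.trans (rrCompose_half p₂)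
  have hqs' : qs = 1 / (Real.exp ε₁ + 1) := by
    rw [hqs, hp₂, Real.exp_add]
    exact rrCompose_oue_eq_inv_add_one ha hb hb₁
  refine ⟨hps', hqs', ?_⟩
  rw [hps', hqs']
  exact half_odds_ratio ha
end

section
/- Privacy degradation over repeated longitudinal reports: for all real numbers ε∞ ≥ 0 and ε₁ ≥ 0 and every natural number t, ln((e^{ε∞ + t·ε₁} + 1)/(e^{ε∞} + e^{t·ε₁})) ≤ min(ε∞, t·ε₁). -/
/-- Privacy degradation over repeated longitudinal reports:
`ε_t = ln((e^{ε∞ + t·ε₁} + 1)/(e^{ε∞} + e^{t·ε₁})) ≤ min(ε∞, t·ε₁)`. -/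
theorem privacy_over_reports (εinf ε₁ : ℝ) (h1 : 0 ≤ εinf) (h2 : 0 ≤ ε₁) (t : ℕ) :
    Real.log ((Real.exp (εinf + (t : ℝ) * ε₁) + 1)
        / (Real.exp εinf + Real.exp ((t : ℝ) * ε₁)))
      ≤ min εinf ((t : ℝ) * ε₁) := by
  set a := εinf
  set b := (t : ℝ) * ε₁ with hb
  have hb0 : 0 ≤ b := mul_nonneg (Nat.cast_nonneg t) h2
  have hd : 0 < Real.exp a + Real.exp b := by positivity
  rw [Real.log_le_iff_le_exp (by positivity), div_le_iff₀ hd]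
  rcases le_total a b with h | h
  · rw [min_eq_left h]
    have h1' : (1 : ℝ) ≤ Real.exp a := Real.one_le_exp h1
    have : Real.exp a * (Real.exp a + Real.exp b)
        = Real.exp a * Real.exp a + Real.exp (a + b) := by
      rw [Real.exp_add]; ring
    nlinarith [Real.exp_pos (a + b)]
  · rw [min_eq_right h]
    have h1' : (1 : ℝ) ≤ Real.exp b := Real.one_le_exp hb0
    have : Real.exp b * (Real.exp a + Real.exp b)
        = Real.exp b * Real.exp b + Real.exp (a + b) := by
      rw [Real.exp_add]; ring
    nlinarith [Real.exp_pos (a + b)]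
end

section
/- ε-LDP guarantee of unary-encoding protocols: let c ≥ 2 be an integer and let p, q be reals with 0 < q ≤ p < 1. For any two values v₁, v₂ of the domain and any output vector b ∈ {0,1}^c, the UE protocol satisfies Pr[UE(v₁) = b] ≤ (p·(1−q))/((1−p)·q) · Pr[UE(v₂) = b], where Pr[UE(v) = b] = ∏_{i=1}^{c} θ_i with θ_i = p if B_i = 1 and b_i = 1, θ_i = 1−p if B_i = 1 and b_i = 0, θ_i = q if B_i = 0 and b_i = 1, θ_i = 1−q if B_i = 0 and b_i = 0, and B is the one-hot encoding of v. Hence UE satisfies ε-LDP with ε = ln(p·(1−q)/((1−p)·q)). -/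
/-- Probability that the unary-encoding (UE) protocol with parameters `p`, `q`
outputs the bit vector `b` on input value `v` (one-hot encoded): the bits are
perturbed independently, a 1-bit being reported as 1 with probability `p` and a
0-bit being reported as 1 with probability `q`. -/
noncomputable def UEprob (c : ℕ) (p q : ℝ) (v : Fin c) (b : Fin c → Bool) : ℝ :=
  ∏ i, if i = v then (if b i then p else 1 - p) else (if b i then q else 1 - q)

lemma UEprob_eq (c : ℕ) (p q : ℝ) (v : Fin c) (b : Fin c → Bool) :
    UEprob c p q v b = (if b v then p else 1 - p) *
      ∏ i ∈ Finset.univ.erase v, (if b i then q else 1 - q) := by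
  unfold UEprob
  rw [← Finset.mul_prod_erase (a := v) _ _ (Finset.mem_univ v)]
  simp only [if_pos rfl]
  congr 1
  apply Finset.prod_congr rfl
  intro i hi
  rw [if_neg (Finset.ne_of_mem_erase hi)]

/-- ε-LDP guarantee of unary-encoding protocols: for any two input values `v₁, v₂`
and any output vector `b`, `Pr[UE(v₁) = b] ≤ (p·(1−q))/((1−p)·q) · Pr[UE(v₂) = b]`;
hence UE satisfies ε-LDP with `ε = ln(p·(1−q)/((1−p)·q))`. -/
theorem ue_ldp (c : ℕ) (hc : 2 ≤ c) (p q : ℝ)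
    (hq0 : 0 < q) (hqp : q ≤ p) (hp1 : p < 1)
    (v₁ v₂ : Fin c) (b : Fin c → Bool) :
    UEprob c p q v₁ b ≤ p * (1 - q) / ((1 - p) * q) * UEprob c p q v₂ b ∧
    UEprob c p q v₁ b
      ≤ Real.exp (Real.log (p * (1 - q) / ((1 - p) * q))) * UEprob c p q v₂ b := by
  have hp0 : 0 < p := lt_of_lt_of_le hq0 hqp
  have hq1 : q < 1 := lt_of_le_of_lt hqp hp1
  have h1p : 0 < 1 - p := by linarith
  have h1q : 0 < 1 - q := by linarith
  have hK0 : 0 < p * (1 - q) / ((1 - p) * q) :=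
    div_pos (mul_pos hp0 h1q) (mul_pos h1p hq0)
  have hK1 : 1 ≤ p * (1 - q) / ((1 - p) * q) := by
    rw [le_div_iff₀ (mul_pos h1p hq0)]
    nlinarith
  suffices h : UEprob c p q v₁ b ≤ p * (1 - q) / ((1 - p) * q) * UEprob c p q v₂ b by
    exact ⟨h, by rwa [Real.exp_log hK0]⟩
  have hpos : ∀ (v : Fin c), 0 < UEprob c p q v b := by
    intro v
    unfold UEprob
    apply Finset.prod_pos
    intro i _
    split_ifs <;> linarith
  by_cases hv : v₁ = v₂
  · subst hv
    calc UEprob c p q v₁ b = 1 * UEprob c p q v₁ b := (one_mul _).symm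
    _ ≤ p * (1 - q) / ((1 - p) * q) * UEprob c p q v₁ b :=
      mul_le_mul_of_nonneg_right hK1 (hpos v₁).le
  · set S := ∏ i ∈ (Finset.univ.erase v₁).erase v₂, (if b i then q else 1 - q) with hS
    have hSpos : 0 < S := by
      apply Finset.prod_pos; intro i _; split_ifs <;> linarith
    have h1 : UEprob c p q v₁ b = (if b v₁ then p else 1 - p) *
        ((if b v₂ then q else 1 - q) * S) := by
      rw [UEprob_eq, ← Finset.mul_prod_erase (a := v₂) _ _
        (Finset.mem_erase.mpr ⟨Ne.symm hv, Finset.mem_univ v₂⟩)]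
    have h2 : UEprob c p q v₂ b = (if b v₂ then p else 1 - p) *
        ((if b v₁ then q else 1 - q) * S) := by
      rw [UEprob_eq, ← Finset.mul_prod_erase (a := v₁) _ _
        (Finset.mem_erase.mpr ⟨hv, Finset.mem_univ v₁⟩), hS, Finset.erase_right_comm]
    rw [h1, h2, div_mul_eq_mul_div, le_div_iff₀ (mul_pos h1p hq0)]
    have key : (1 - p) * q ≤ p * (1 - q) := by nlinarith
    have hsq : ((1 - p) * q) * ((1 - p) * q) ≤ (p * (1 - q)) * (p * (1 - q)) :=
      mul_le_mul key key (mul_nonneg h1p.le hq0.le) (mul_nonneg hp0.le h1q.le)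
    rcases Bool.eq_false_or_eq_true (b v₁) with h₁ | h₁ <;>
      rcases Bool.eq_false_or_eq_true (b v₂) with h₂ | h₂ <;>
      simp only [h₁, h₂, if_true, Bool.false_eq_true, if_false] <;>
      nlinarith [mul_le_mul_of_nonneg_right key (mul_nonneg (mul_nonneg hp0.le hq0.le) hSpos.le),
        mul_le_mul_of_nonneg_right key (mul_nonneg (mul_nonneg h1p.le h1q.le) hSpos.le),
        mul_le_mul_of_nonneg_right hsq hSpos.le]
end

section
/- Privacy amplification of RS+FD[GRR] under a single differing attribute: let d ≥ 1 and c ≥ 2 be integers, let ε > 0 be real, set ε′ = ln(d·(e^{ε} − 1) + 1), p′ = e^{ε′}/(e^{ε′} + c − 1) and q′ = 1/(e^{ε′} + c − 1), and define the output probability of the RS+FD[GRR] mechanism on tuples in ({1,…,c})^d by P(y | v) = (1/d)·∑_{j=1}^{d} g(v_j, y_j)·(1/c)^{d−1}, where g(a, b) = p′ if a = b and g(a, b) = q′ otherwise. Then for all input tuples v, v′ that differ in at most one coordinate and every output tuple y, P(y | v) ≤ e^{ε}·P(y | v′). -/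
/-- Output probability of the RS+FD[GRR] mechanism on tuples in `(Fin c)^d`:
`P(y | v) = (1/d)·∑_{j} g(v_j, y_j)·(1/c)^{d−1}`, where `g(a, b) = p'` if `a = b`
and `g(a, b) = q'` otherwise. -/
noncomputable def rsfdGrrProb (d c : ℕ) (p' q' : ℝ) (v y : Fin d → Fin c) : ℝ :=
  (1 / (d : ℝ)) * ∑ j, (if v j = y j then p' else q') * (1 / (c : ℝ)) ^ (d - 1)

/-- Privacy amplification of RS+FD[GRR] under a single differing attribute: with
`ε′ = ln(d·(e^{ε} − 1) + 1)`, `p′ = e^{ε′}/(e^{ε′} + c − 1)` and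
`q′ = 1/(e^{ε′} + c − 1)`, for all input tuples `v, v′` differing in at most one
coordinate and every output tuple `y`, `P(y | v) ≤ e^{ε}·P(y | v′)`. -/
theorem rsfd_grr_privacy (d c : ℕ) (hd : 1 ≤ d) (hc : 2 ≤ c)
    (ε : ℝ) (hε : 0 < ε)
    (ε' p' q' : ℝ)
    (hε' : ε' = Real.log ((d : ℝ) * (Real.exp ε - 1) + 1))
    (hp' : p' = Real.exp ε' / (Real.exp ε' + (c : ℝ) - 1))
    (hq' : q' = 1 / (Real.exp ε' + (c : ℝ) - 1))
    (v v' y : Fin d → Fin c)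
    (hdiff : ∃ j₀, ∀ i, i ≠ j₀ → v i = v' i) :
    rsfdGrrProb d c p' q' v y ≤ Real.exp ε * rsfdGrrProb d c p' q' v' y := by
  obtain ⟨j₀, hj₀⟩ := hdiff
  have he1 : 1 < Real.exp ε := by
    have := Real.exp_lt_exp.mpr hε
    simpa using this
  have hdpos : (0:ℝ) < d := by positivity
  have hd1 : (1:ℝ) ≤ (d:ℝ) := by exact_mod_cast hd
  have hargpos : (0:ℝ) < (d : ℝ) * (Real.exp ε - 1) + 1 := by nlinarith
  have hE : Real.exp ε' = (d : ℝ) * (Real.exp ε - 1) + 1 := by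
    rw [hε', Real.exp_log hargpos]
  have hc1 : (2:ℝ) ≤ (c:ℝ) := by exact_mod_cast hc
  have hDpos : (0:ℝ) < Real.exp ε' + (c : ℝ) - 1 := by
    have := Real.exp_pos ε'
    nlinarith
  have hqpos : 0 < q' := by rw [hq']; positivity
  have hpq : p' = Real.exp ε' * q' := by rw [hp', hq']; ring
  have hE1 : 1 ≤ Real.exp ε' := by rw [hE]; nlinarith
  have hqp : q' ≤ p' := by rw [hpq]; nlinarith
  -- abbreviations
  set a : Fin d → ℝ := fun j => if v j = y j then p' else q' with ha
  set b : Fin d → ℝ := fun j => if v' j = y j then p' else q' with hb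
  have habq : ∀ j, q' ≤ a j ∧ a j ≤ p' ∧ q' ≤ b j ∧ b j ≤ p' := by
    intro j
    simp only [ha, hb]
    refine ⟨?_, ?_, ?_, ?_⟩
    · split
      exacts [hqp, le_rfl]
    · split
      exacts [le_rfl, hqp]
    · split
      exacts [hqp, le_rfl]
    · split
      exacts [le_rfl, hqp]
  have hab : ∀ j ≠ j₀, a j = b j := by
    intro j hj
    simp only [ha, hb, hj₀ j hj]
  -- reduce to the sum inequality
  have key : ∑ j, a j ≤ Real.exp ε * ∑ j, b j := by
    have hsplit : ∀ f : Fin d → ℝ,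
        ∑ j, f j = (∑ j ∈ Finset.univ.erase j₀, f j) + f j₀ := by
      intro f
      rw [Finset.sum_erase_add _ _ (Finset.mem_univ j₀)]
    rw [hsplit a, hsplit b]
    have hSeq : ∑ j ∈ Finset.univ.erase j₀, a j = ∑ j ∈ Finset.univ.erase j₀, b j := by
      apply Finset.sum_congr rfl
      intro j hj
      exact hab j (Finset.ne_of_mem_erase hj)
    set S := ∑ j ∈ Finset.univ.erase j₀, b j with hS
    rw [hSeq]
    have hcard : (Finset.univ.erase j₀).card = d - 1 := by
      rw [Finset.card_erase_of_mem (Finset.mem_univ j₀)]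
      simp
    have hSlb : ((d:ℝ) - 1) * q' ≤ S := by
      have : ∑ _j ∈ Finset.univ.erase j₀, q' ≤ S := by
        apply Finset.sum_le_sum
        intro j _
        exact (habq j).2.2.1
      rw [Finset.sum_const, hcard, nsmul_eq_mul] at this
      have hcast : ((d - 1 : ℕ) : ℝ) = (d:ℝ) - 1 := by
        have : (1:ℕ) ≤ d := hd
        push_cast [Nat.cast_sub this]
        ring
      rwa [hcast] at this
    have ha0 : a j₀ ≤ p' := (habq j₀).2.1
    have hb0 : q' ≤ b j₀ := (habq j₀).2.2.1
    nlinarith [hE, hpq, Real.exp_pos ε']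
  -- put constants back
  unfold rsfdGrrProb
  have hC : (0:ℝ) ≤ (1 / (c : ℝ)) ^ (d - 1) := by positivity
  simp only [← Finset.sum_mul]
  rw [show Real.exp ε * ((1 / (d:ℝ)) * ((∑ j, b j) * (1 / (c : ℝ)) ^ (d - 1)))
      = (1 / (d:ℝ)) * ((Real.exp ε * ∑ j, b j) * (1 / (c : ℝ)) ^ (d - 1)) by ring]
  apply mul_le_mul_of_nonneg_left _ (by positivity)
  exact mul_le_mul_of_nonneg_right key hC
end
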